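/- Let c, D > 0 and let G be a finite Borel measure on [0,∞) such that Σ_{l=0}^∞ (2l+1)·C_l < ∞. Then for all t, t' ≥ 0, Σ_{l=0}^∞ (2l+1)·|C_l(t,t')| ≤ Σ_{l=0}^∞ (2l+1)·C_l; in particular the series Σ_{l=0}^∞ (2l+1)·C_l(t,t') converges absolutely. -/

import Mathlib

/-!
For `t ≥ 0` the kernel satisfies `|H̃(μ,t)| ≤ 1`: with `κ = c²t/(2D)`, its bracket is
`cosh y + a sinh y` with `a ≥ 1`, or `1 + κ`, or `cos y + a sin y` with `a ≥ 0`, where `a y = κ`,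
and each of these is at most `exp κ`, which the prefactor `exp (-κ)` cancels. Hence
`|C_l(t,t')| ≤ C_l(0,0)` termwise, as soon as `J_{l+1/2}(μ)²/μ` is `G`-integrable. As `G` is finite,
boundedness on `[0,∞)` suffices: near `0` it follows from the power series, and for `μ ≥ 1` from
`J_{-1/2}(x) = √(2/(πx)) cos x`, `J_{1/2}(x) = √(2/(πx)) sin x` and the three-term recurrence.
-/

open MeasureTheory Real Set

/-- `H̃₁(μ,t)` for the subcritical regime `0 ≤ μ < c/(2D)`. -/
noncomputable def Htilde1 (c D μ t : ℝ) : ℝ :=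
  Real.exp (-(c ^ 2 * t) / (2 * D)) *
    (Real.cosh (c * t * Real.sqrt (c ^ 2 / (4 * D ^ 2) - μ ^ 2)) +
      c / (2 * D * Real.sqrt (c ^ 2 / (4 * D ^ 2) - μ ^ 2)) *
        Real.sinh (c * t * Real.sqrt (c ^ 2 / (4 * D ^ 2) - μ ^ 2)))

/-- `H̃₂(μ,t)` for the supercritical regime `μ > c/(2D)`. -/
noncomputable def Htilde2 (c D μ t : ℝ) : ℝ :=
  Real.exp (-(c ^ 2 * t) / (2 * D)) *
    (Real.cos (c * t * Real.sqrt (μ ^ 2 - c ^ 2 / (4 * D ^ 2))) +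
      c / (2 * D * Real.sqrt (μ ^ 2 - c ^ 2 / (4 * D ^ 2))) *
        Real.sin (c * t * Real.sqrt (μ ^ 2 - c ^ 2 / (4 * D ^ 2))))

/-- `H̃(μ,t)`, pieced together from `H̃₁`, the value at `μ = c/(2D)`, and `H̃₂`. -/
noncomputable def Htilde (c D μ t : ℝ) : ℝ :=
  if μ < c / (2 * D) then Htilde1 c D μ t
  else if μ = c / (2 * D) then Real.exp (-(c ^ 2 * t) / (2 * D)) * (1 + c ^ 2 * t / (2 * D))
  else Htilde2 c D μ t

/-- Bessel function of the first kind of real order `ν`, via its power series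
(with real powers; for `ν > 0` this gives `besselJ ν 0 = 0`). -/
noncomputable def besselJ (ν x : ℝ) : ℝ :=
  ∑' n : ℕ, ((-1 : ℝ) ^ n / (n.factorial * Real.Gamma ((n : ℝ) + ν + 1))) *
    (x / 2) ^ (2 * (n : ℝ) + ν)

/-- The integrand `J_{l+1/2}(μ)² / μ`, with its value at `μ = 0` defined by
continuous extension (`2/π` for `l = 0`, `0` for `l ≥ 1`). -/
noncomputable def besselInt (l : ℕ) (μ : ℝ) : ℝ :=
  if μ = 0 then (if l = 0 then 2 / Real.pi else 0)
  else besselJ ((l : ℝ) + 1 / 2) μ ^ 2 / μ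

/-- Angular power spectrum `C_l(t,t')` of the spherical hyperbolic diffusion field. -/
noncomputable def Cl (c D : ℝ) (G : MeasureTheory.Measure ℝ) (l : ℕ) (t t' : ℝ) : ℝ :=
  2 * Real.pi ^ 2 * ∫ μ in Set.Ici (0 : ℝ), besselInt l μ * Htilde c D μ t * Htilde c D μ t' ∂G

lemma Real.sinh_le_mul_exp (y : ℝ) : Real.sinh y ≤ y * Real.exp y := by
  have h := Real.add_one_le_exp (-(2 * y))
  rw [Real.sinh_eq, show Real.exp (-y) = Real.exp y * Real.exp (-(2 * y)) by
    rw [← Real.exp_add]; ring_nf]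
  nlinarith [Real.exp_pos y]

lemma Real.cosh_add_mul_sinh_le_exp {a : ℝ} (ha : 1 ≤ a) (y : ℝ) :
    Real.cosh y + a * Real.sinh y ≤ Real.exp (a * y) :=
  calc Real.cosh y + a * Real.sinh y = Real.exp y + (a - 1) * Real.sinh y := by
        rw [← Real.cosh_add_sinh]; ring
    _ ≤ Real.exp y * ((a - 1) * y + 1) := by
        nlinarith [Real.sinh_le_mul_exp y]
    _ ≤ Real.exp y * Real.exp ((a - 1) * y) :=
        mul_le_mul_of_nonneg_left (Real.add_one_le_exp _) (Real.exp_pos y).le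
    _ = Real.exp (a * y) := by rw [← Real.exp_add]; ring_nf

lemma Real.abs_cos_add_mul_sin_le_exp {a y : ℝ} (ha : 0 ≤ a) (hy : 0 ≤ y) :
    |Real.cos y + a * Real.sin y| ≤ Real.exp (a * y) :=
  calc |Real.cos y + a * Real.sin y| ≤ 1 + a * y := by
        have hsin : |Real.sin y| ≤ y := Real.abs_sin_le_abs.trans_eq (abs_of_nonneg hy)
        grw [abs_add_le, abs_mul, abs_of_nonneg ha, Real.abs_cos_le_one, hsin]
    _ ≤ Real.exp (a * y) := by linarith [Real.add_one_le_exp (a * y)]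

lemma Real.abs_exp_neg_mul_le_one {κ B : ℝ} (h : |B| ≤ Real.exp κ) : |Real.exp (-κ) * B| ≤ 1 := by
  rw [abs_mul, Real.abs_exp, Real.exp_neg]
  exact inv_mul_le_one_of_le₀ h (Real.exp_pos κ).le

section Htilde

variable {c D t : ℝ}

lemma div_mul_mul_eq_damping {s : ℝ} (hD : D ≠ 0) (hs : s ≠ 0) :
    c / (2 * D * s) * (c * t * s) = c ^ 2 * t / (2 * D) := by
  field_simp

lemma abs_Htilde1_le_one (hc : 0 < c) (hD : 0 < D) (ht : 0 ≤ t) (μ : ℝ) :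
    |Htilde1 c D μ t| ≤ 1 := by
  unfold Htilde1
  rw [neg_div]
  apply Real.abs_exp_neg_mul_le_one
  set s := Real.sqrt (c ^ 2 / (4 * D ^ 2) - μ ^ 2)
  rcases (show 0 ≤ s from Real.sqrt_nonneg _).eq_or_lt with hs | hs
  · simp only [← hs, mul_zero, Real.cosh_zero, Real.sinh_zero, add_zero, abs_one]
    exact Real.one_le_exp (by positivity)
  have hsk : s ≤ c / (2 * D) := by
    rw [Real.sqrt_le_left (by positivity)]
    linarith [sq_nonneg μ, show (c / (2 * D)) ^ 2 = c ^ 2 / (4 * D ^ 2) by ring]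
  have ha : 1 ≤ c / (2 * D * s) := by
    rw [le_div_iff₀ (by positivity), one_mul, ← le_div_iff₀' (by positivity)]
    exact hsk
  have hpos : 0 ≤ Real.cosh (c * t * s) + c / (2 * D * s) * Real.sinh (c * t * s) := by
    have : 0 ≤ Real.sinh (c * t * s) := Real.sinh_nonneg_iff.2 (by positivity)
    have := Real.cosh_pos (c * t * s)
    positivity
  rw [abs_of_nonneg hpos, ← div_mul_mul_eq_damping hD.ne' hs.ne']
  exact Real.cosh_add_mul_sinh_le_exp ha _

lemma abs_Htilde2_le_one (hc : 0 < c) (hD : 0 < D) (ht : 0 ≤ t) (μ : ℝ) :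
    |Htilde2 c D μ t| ≤ 1 := by
  unfold Htilde2
  rw [neg_div]
  apply Real.abs_exp_neg_mul_le_one
  set s := Real.sqrt (μ ^ 2 - c ^ 2 / (4 * D ^ 2))
  rcases (show 0 ≤ s from Real.sqrt_nonneg _).eq_or_lt with hs | hs
  · simp only [← hs, mul_zero, Real.cos_zero, Real.sin_zero, add_zero, abs_one]
    exact Real.one_le_exp (by positivity)
  rw [← div_mul_mul_eq_damping hD.ne' hs.ne']
  exact Real.abs_cos_add_mul_sin_le_exp (by positivity) (by positivity)

lemma abs_Htilde_le_one (hc : 0 < c) (hD : 0 < D) (ht : 0 ≤ t) (μ : ℝ) :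
    |Htilde c D μ t| ≤ 1 := by
  unfold Htilde
  split_ifs
  · exact abs_Htilde1_le_one hc hD ht μ
  · rw [neg_div]
    apply Real.abs_exp_neg_mul_le_one
    rw [abs_of_nonneg (by positivity), add_comm]
    exact Real.add_one_le_exp _
  · exact abs_Htilde2_le_one hc hD ht μ

end Htilde

open scoped Nat

noncomputable def besselCoeff (ν : ℝ) (n : ℕ) : ℝ := ((n ! : ℝ) * Real.Gamma (n + ν + 1))⁻¹

noncomputable def besselSeries (ν y : ℝ) : ℝ := ∑' n : ℕ, besselCoeff ν n * y ^ n

section BesselSeries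

variable {ν : ℝ}

lemma Real.Gamma_add_one_le_two_pow_mul (hν : -(1 / 2) ≤ ν) (n : ℕ) :
    Real.Gamma (ν + 1) ≤ 2 ^ n * Real.Gamma (n + ν + 1) := by
  induction n with
  | zero => simp
  | succ n ih =>
    have harg : 1 / 2 ≤ (n : ℝ) + ν + 1 := by linarith [n.cast_nonneg (α := ℝ)]
    have hΓ := Real.Gamma_pos_of_pos (by linarith : 0 < (n : ℝ) + ν + 1)
    rw [show ((n + 1 : ℕ) : ℝ) + ν + 1 = (n + ν + 1) + 1 by push_cast; ring,
      Real.Gamma_add_one (s := (n : ℝ) + ν + 1) (by linarith), pow_succ]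
    nlinarith [mul_nonneg (by positivity : (0 : ℝ) ≤ 2 ^ n * Real.Gamma (n + ν + 1))
      (by linarith : (0 : ℝ) ≤ 2 * (n + ν + 1) - 1)]

lemma besselCoeff_pos (hν : -1 < ν) (n : ℕ) : 0 < besselCoeff ν n := by
  have := Real.Gamma_pos_of_pos (by linarith [n.cast_nonneg (α := ℝ)] : 0 < (n : ℝ) + ν + 1)
  unfold besselCoeff
  positivity

lemma abs_besselCoeff_mul_pow_le (hν : -(1 / 2) ≤ ν) (y : ℝ) (n : ℕ) :
    |besselCoeff ν n * y ^ n| ≤ (2 * |y|) ^ n / n ! / Real.Gamma (ν + 1) := by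
  have hΓ := Real.Gamma_pos_of_pos (by linarith : 0 < ν + 1)
  have hΓn := Real.Gamma_pos_of_pos (by linarith [n.cast_nonneg (α := ℝ)] : 0 < (n : ℝ) + ν + 1)
  rw [abs_mul, abs_of_pos (besselCoeff_pos (by linarith) n), abs_pow, besselCoeff, mul_pow,
    div_div, ← div_eq_inv_mul, div_le_div_iff₀ (by positivity) (by positivity)]
  have := Real.Gamma_add_one_le_two_pow_mul hν n
  have : 0 ≤ |y| ^ n * n ! := by positivity
  nlinarith

lemma summable_besselCoeff_mul_pow (hν : -(1 / 2) ≤ ν) (y : ℝ) :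
    Summable fun n => besselCoeff ν n * y ^ n :=
  Summable.of_norm_bounded (f := fun n => besselCoeff ν n * y ^ n)
    ((Real.summable_pow_div_factorial _).div_const _) (abs_besselCoeff_mul_pow_le hν y)

lemma abs_besselSeries_le (hν : -(1 / 2) ≤ ν) {y : ℝ} (hy : |y| ≤ 1 / 4) :
    |besselSeries ν y| ≤ 2 / Real.Gamma (ν + 1) := by
  have hΓ := Real.Gamma_pos_of_pos (by linarith : 0 < ν + 1)
  refine tsum_of_norm_bounded (f := fun n => besselCoeff ν n * y ^ n)
    (hasSum_geometric_two.div_const (Real.Gamma (ν + 1))) fun n => ?_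
  refine (abs_besselCoeff_mul_pow_le hν y n).trans ?_
  have h1 : (1 : ℝ) ≤ n ! := by exact_mod_cast n.factorial_pos
  have h2 : (2 * |y|) ^ n ≤ (1 / 2) ^ n := pow_le_pow_left₀ (by positivity) (by linarith) n
  gcongr
  exact (div_le_self (by positivity) h1).trans h2

lemma besselJ_eq_rpow_mul_besselSeries {x : ℝ} (hx : 0 < x) :
    besselJ ν x = (x / 2) ^ ν * besselSeries ν (-(x / 2) ^ 2) := by
  rw [besselJ, besselSeries, ← tsum_mul_left]
  refine tsum_congr fun n => ?_
  rw [Real.rpow_add (by positivity), show 2 * (n : ℝ) = ((2 * n : ℕ) : ℝ) by push_cast; ring,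
    Real.rpow_natCast, pow_mul, neg_pow ((x / 2) ^ 2), besselCoeff]
  ring

lemma besselCoeff_sub_one_succ (hν : 0 < ν) (n : ℕ) :
    besselCoeff (ν - 1) (n + 1) = ν * besselCoeff ν (n + 1) + besselCoeff (ν + 1) n := by
  have hz : 0 < (n : ℝ) + ν + 1 := by linarith [n.cast_nonneg (α := ℝ)]
  have hΓ := Real.Gamma_pos_of_pos hz
  simp only [besselCoeff]
  rw [Nat.factorial_succ, Nat.cast_mul, Nat.cast_succ,
    show (n : ℝ) + 1 + (ν - 1) + 1 = n + ν + 1 by ring,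
    show (n : ℝ) + 1 + ν + 1 = (n + ν + 1) + 1 by ring,
    show (n : ℝ) + (ν + 1) + 1 = (n + ν + 1) + 1 by ring, Real.Gamma_add_one hz.ne']
  generalize Real.Gamma (n + ν + 1) = Γ at *
  field_simp
  ring

lemma besselSeries_sub_one (hν : 0 < ν) (y : ℝ) :
    besselSeries (ν - 1) y = ν * besselSeries ν y + y * besselSeries (ν + 1) y := by
  have ha := summable_besselCoeff_mul_pow (ν := ν) (by linarith) y
  have hb := summable_besselCoeff_mul_pow (ν := ν + 1) (by linarith) y
  have ha_succ : Summable fun n : ℕ => besselCoeff ν (n + 1) * y ^ (n + 1) :=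
    (summable_nat_add_iff 1).2 ha
  have hsucc : ∀ n : ℕ, besselCoeff (ν - 1) (n + 1) * y ^ (n + 1) =
      ν * (besselCoeff ν (n + 1) * y ^ (n + 1)) + y * (besselCoeff (ν + 1) n * y ^ n) := by
    intro n
    rw [besselCoeff_sub_one_succ hν, pow_succ]
    ring
  have hs_succ : Summable fun n : ℕ => besselCoeff (ν - 1) (n + 1) * y ^ (n + 1) := by
    simpa only [hsucc] using (ha_succ.mul_left ν).add (hb.mul_left y)
  have hzero : besselCoeff (ν - 1) 0 = ν * besselCoeff ν 0 := by
    have hΓ := Real.Gamma_pos_of_pos hν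
    simp only [besselCoeff, Nat.factorial_zero, Nat.cast_one, Nat.cast_zero, one_mul, zero_add,
      sub_add_cancel, Real.Gamma_add_one hν.ne']
    field_simp
  unfold besselSeries
  rw [((summable_nat_add_iff (f := fun n => besselCoeff (ν - 1) n * y ^ n) 1).1
      hs_succ).tsum_eq_zero_add, ha.tsum_eq_zero_add, tsum_congr hsucc,
    (ha_succ.mul_left ν).tsum_add (hb.mul_left y), tsum_mul_left, tsum_mul_left, hzero]
  ring

lemma besselJ_add_one (hν : 0 < ν) {x : ℝ} (hx : 0 < x) :
    besselJ (ν + 1) x = 2 * ν / x * besselJ ν x - besselJ (ν - 1) x := by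
  simp only [besselJ_eq_rpow_mul_besselSeries hx, besselSeries_sub_one hν,
    Real.rpow_add_one (by positivity : x / 2 ≠ 0), Real.rpow_sub_one (by positivity : x / 2 ≠ 0)]
  field_simp
  ring

end BesselSeries

lemma Real.Gamma_mul_Gamma_half_nat (m : ℕ) :
    Real.Gamma ((m + 1) / 2) * Real.Gamma (m / 2 + 1) = m ! * √π / 2 ^ m := by
  have h := Real.Gamma_mul_Gamma_add_half ((m + 1) / 2)
  rw [show (m + 1 : ℝ) / 2 + 1 / 2 = m / 2 + 1 by ring, show 2 * ((m + 1 : ℝ) / 2) = m + 1 by ring,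
    show 1 - ((m : ℝ) + 1) = -(m : ℝ) by ring, Real.Gamma_nat_eq_factorial,
    Real.rpow_neg (by norm_num), Real.rpow_natCast] at h
  rw [h]
  ring

lemma besselCoeff_neg_half (n : ℕ) : besselCoeff (-(1 / 2)) n = 4 ^ n / ((2 * n)! * √π) := by
  have h := Real.Gamma_mul_Gamma_half_nat (2 * n)
  rw [show ((2 * n : ℕ) : ℝ) / 2 + 1 = n + 1 by push_cast; ring, Real.Gamma_nat_eq_factorial,
    show ((2 * n : ℕ) + 1 : ℝ) / 2 = n + -(1 / 2) + 1 by push_cast; ring, pow_mul] at h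
  rw [besselCoeff, mul_comm, h]
  norm_num

lemma besselCoeff_half (n : ℕ) : besselCoeff (1 / 2) n = 2 * 4 ^ n / ((2 * n + 1)! * √π) := by
  have h := Real.Gamma_mul_Gamma_half_nat (2 * n + 1)
  rw [show ((2 * n + 1 : ℕ) + 1 : ℝ) / 2 = n + 1 by push_cast; ring, Real.Gamma_nat_eq_factorial,
    show ((2 * n + 1 : ℕ) : ℝ) / 2 + 1 = n + 1 / 2 + 1 by push_cast; ring, pow_succ, pow_mul] at h
  rw [besselCoeff, h]
  norm_num
  field_simp

lemma besselSeries_neg_half (x : ℝ) : besselSeries (-(1 / 2)) (-(x / 2) ^ 2) = cos x / √π := by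
  rw [besselSeries, Real.cos_eq_tsum, ← tsum_div_const]
  refine tsum_congr fun n => ?_
  rw [besselCoeff_neg_half, neg_pow, div_pow, show (2 : ℝ) ^ 2 = 4 by norm_num, div_pow,
    pow_mul]
  field_simp

lemma besselSeries_half (x : ℝ) : x * besselSeries (1 / 2) (-(x / 2) ^ 2) = 2 * sin x / √π := by
  rw [besselSeries, Real.sin_eq_tsum, ← tsum_mul_left, ← tsum_mul_left, ← tsum_div_const]
  refine tsum_congr fun n => ?_
  rw [besselCoeff_half, neg_pow, div_pow, show (2 : ℝ) ^ 2 = 4 by norm_num, div_pow,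
    pow_succ x (2 * n), pow_mul]
  field_simp

lemma Real.sqrt_two_div_pi_mul_eq {x : ℝ} (hx : 0 < x) :
    √(2 / (π * x)) = √(x / 2) * 2 / (√π * x) := by
  rw [Real.sqrt_eq_iff_mul_self_eq (by positivity) (by positivity)]
  field_simp
  rw [Real.sq_sqrt Real.pi_pos.le, Real.sq_sqrt (by positivity)]
  ring

lemma besselJ_neg_half {x : ℝ} (hx : 0 < x) :
    besselJ (-(1 / 2)) x = √(2 / (π * x)) * cos x := by
  rw [besselJ_eq_rpow_mul_besselSeries hx, besselSeries_neg_half, Real.sqrt_two_div_pi_mul_eq hx,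
    Real.rpow_neg (by positivity), ← Real.sqrt_eq_rpow, Real.sqrt_div' _ zero_le_two]
  field_simp
  rw [Real.sq_sqrt zero_le_two, Real.sq_sqrt hx.le]
  ring

lemma besselJ_half {x : ℝ} (hx : 0 < x) : besselJ (1 / 2) x = √(2 / (π * x)) * sin x := by
  rw [besselJ_eq_rpow_mul_besselSeries hx, ← Real.sqrt_eq_rpow, Real.sqrt_two_div_pi_mul_eq hx,
    eq_div_of_mul_eq hx.ne' ((mul_comm _ _).trans (besselSeries_half x))]
  ring

lemma abs_sqrt_two_div_pi_mul_le_one {x u : ℝ} (hx : 1 ≤ x) (hu : |u| ≤ 1) :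
    |√(2 / (π * x)) * u| ≤ 1 := by
  have h : √(2 / (π * x)) ≤ 1 :=
    Real.sqrt_le_one.mpr ((div_le_one (by positivity)).mpr (by nlinarith [Real.pi_gt_three]))
  rw [abs_mul, abs_of_nonneg (Real.sqrt_nonneg _)]
  exact mul_le_one₀ h (abs_nonneg _) hu

lemma exists_abs_besselJ_nat_sub_half_le (k : ℕ) :
    ∃ C, ∀ x, 1 ≤ x → |besselJ (k - 1 / 2) x| ≤ C := by
  induction k using Nat.twoStepInduction with
  | zero =>
    refine ⟨1, fun x hx => ?_⟩
    rw [Nat.cast_zero, zero_sub, besselJ_neg_half (by linarith)]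
    exact abs_sqrt_two_div_pi_mul_le_one hx (Real.abs_cos_le_one x)
  | one =>
    refine ⟨1, fun x hx => ?_⟩
    rw [show ((1 : ℕ) : ℝ) - 1 / 2 = 1 / 2 by norm_num, besselJ_half (by linarith)]
    exact abs_sqrt_two_div_pi_mul_le_one hx (Real.abs_sin_le_one x)
  | more k ih₀ ih₁ =>
    obtain ⟨C₀, hC₀⟩ := ih₀
    obtain ⟨C₁, hC₁⟩ := ih₁
    have hν : (0 : ℝ) < k + 1 / 2 := by positivity
    refine ⟨2 * (k + 1 / 2) * C₁ + C₀, fun x hx => ?_⟩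
    have hx₀ : 0 < x := by linarith
    have h₀ := hC₀ x hx
    have h₁ := hC₁ x hx
    rw [show ((k + 1 : ℕ) : ℝ) - 1 / 2 = k + 1 / 2 by push_cast; ring] at h₁
    rw [show (k : ℝ) - 1 / 2 = k + 1 / 2 - 1 by ring] at h₀
    have hq : |2 * (k + 1 / 2) / x| ≤ 2 * (k + 1 / 2) := by
      rw [abs_of_pos (by positivity)]
      exact div_le_self (by positivity) hx
    rw [show ((k + 2 : ℕ) : ℝ) - 1 / 2 = k + 1 / 2 + 1 by push_cast; ring, besselJ_add_one hν hx₀]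
    calc _ ≤ |2 * (k + 1 / 2) / x| * |besselJ (k + 1 / 2) x| + |besselJ (k + 1 / 2 - 1) x| := by
          rw [← abs_mul]; exact abs_sub _ _
      _ ≤ 2 * (k + 1 / 2) * C₁ + C₀ := by gcongr

lemma besselJ_sq_div_le_of_le_one {ν x : ℝ} (hν : 1 / 2 ≤ ν) (hx₀ : 0 < x) (hx₁ : x ≤ 1) :
    besselJ ν x ^ 2 / x ≤ (2 / Real.Gamma (ν + 1)) ^ 2 := by
  have hΓ := Real.Gamma_pos_of_pos (by linarith : 0 < ν + 1)
  have hS : |besselSeries ν (-(x / 2) ^ 2)| ≤ 2 / Real.Gamma (ν + 1) := by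
    refine abs_besselSeries_le (by linarith) ?_
    rw [abs_neg, abs_of_nonneg (by positivity)]
    nlinarith
  have hP : ((x / 2) ^ ν) ^ 2 ≤ x :=
    calc ((x / 2) ^ ν) ^ 2 = (x / 2) ^ (2 * ν) := by
          rw [← Real.rpow_natCast, ← Real.rpow_mul (by positivity)]; ring_nf
      _ ≤ (x / 2) ^ (1 : ℝ) :=
          Real.rpow_le_rpow_of_exponent_ge (by positivity) (by linarith) (by linarith)
      _ ≤ x := by rw [Real.rpow_one]; linarith
  rw [besselJ_eq_rpow_mul_besselSeries hx₀, mul_pow, div_le_iff₀ hx₀, mul_comm _ x,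
    ← sq_abs (besselSeries _ _)]
  exact mul_le_mul hP (pow_le_pow_left₀ (abs_nonneg _) hS 2) (sq_nonneg _) hx₀.le

lemma besselInt_nonneg (l : ℕ) {μ : ℝ} (hμ : 0 ≤ μ) : 0 ≤ besselInt l μ := by
  unfold besselInt
  split_ifs
  · positivity
  · rfl
  · exact div_nonneg (sq_nonneg _) hμ

lemma exists_besselInt_le (l : ℕ) : ∃ B, ∀ μ, 0 ≤ μ → besselInt l μ ≤ B := by
  obtain ⟨C, hC⟩ := exists_abs_besselJ_nat_sub_half_le (l + 1)
  rw [show ((l + 1 : ℕ) : ℝ) - 1 / 2 = l + 1 / 2 by push_cast; ring] at hC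
  refine ⟨max (2 / π) (max (C ^ 2) ((2 / Real.Gamma (l + 1 / 2 + 1)) ^ 2)), fun μ hμ => ?_⟩
  rcases hμ.eq_or_lt with rfl | hμ₀
  · rw [besselInt, if_pos rfl]
    split_ifs
    · exact le_max_left _ _
    · exact (le_max_left _ _).trans' (by positivity)
  rw [besselInt, if_neg hμ₀.ne']
  rcases le_total μ 1 with hμ₁ | hμ₁
  · exact (besselJ_sq_div_le_of_le_one (by linarith [l.cast_nonneg (α := ℝ)]) hμ₀ hμ₁).trans
      (le_max_of_le_right (le_max_right _ _))
  · calc _ ≤ besselJ (l + 1 / 2) μ ^ 2 := div_le_self (sq_nonneg _) hμ₁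
      _ ≤ C ^ 2 := by rw [← sq_abs]; exact pow_le_pow_left₀ (abs_nonneg _) (hC μ hμ₁) 2
      _ ≤ _ := le_max_of_le_right (le_max_left _ _)

lemma measurable_besselJ (ν : ℝ) : Measurable (besselJ ν) :=
  Measurable.tsum fun n => by fun_prop

lemma measurable_besselInt (l : ℕ) : Measurable (besselInt l) :=
  Measurable.ite (measurableSet_singleton 0) measurable_const
    (((measurable_besselJ _).pow_const 2).div measurable_id)

lemma integrableOn_besselInt (G : Measure ℝ) [IsFiniteMeasure G] (l : ℕ) :
    IntegrableOn (besselInt l) (Ici 0) G := by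
  obtain ⟨B, hB⟩ := exists_besselInt_le l
  refine Measure.integrableOn_of_bounded (measure_ne_top G _)
    (measurable_besselInt l).aestronglyMeasurable (M := B)
    (ae_restrict_of_forall_mem measurableSet_Ici fun μ hμ => ?_)
  rw [Real.norm_eq_abs, abs_of_nonneg (besselInt_nonneg l hμ)]
  exact hB μ hμ

lemma abs_setIntegral_mul_le_setIntegral {α : Type*} [MeasurableSpace α] {μ : Measure α}
    {s : Set α} {f g : α → ℝ} (hs : MeasurableSet s) (hf : IntegrableOn f s μ)
    (hf₀ : ∀ x ∈ s, 0 ≤ f x) (hg : ∀ x ∈ s, |g x| ≤ 1) :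
    |∫ x in s, f x * g x ∂μ| ≤ ∫ x in s, f x ∂μ :=
  norm_integral_le_of_norm_le (f := fun x => f x * g x) hf <|
    ae_restrict_of_forall_mem hs fun x hx => by
      rw [Real.norm_eq_abs, abs_mul, abs_of_nonneg (hf₀ x hx)]
      exact mul_le_of_le_one_right (hf₀ x hx) (hg x hx)

lemma Htilde_zero (c D μ : ℝ) : Htilde c D μ 0 = 1 := by
  unfold Htilde Htilde1 Htilde2
  split_ifs <;> simp

lemma Cl_zero_zero (c D : ℝ) (G : Measure ℝ) (l : ℕ) :
    Cl c D G l 0 0 = 2 * π ^ 2 * ∫ μ in Ici 0, besselInt l μ ∂G := by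
  simp only [Cl, Htilde_zero, mul_one]

lemma abs_Cl_le_Cl_zero_zero {c D t t' : ℝ} (hc : 0 < c) (hD : 0 < D) (G : Measure ℝ)
    [IsFiniteMeasure G] (ht : 0 ≤ t) (ht' : 0 ≤ t') (l : ℕ) :
    |Cl c D G l t t'| ≤ Cl c D G l 0 0 := by
  rw [Cl_zero_zero, Cl, abs_mul, abs_of_pos (by positivity)]
  gcongr
  simp_rw [mul_assoc]
  refine abs_setIntegral_mul_le_setIntegral measurableSet_Ici (integrableOn_besselInt G l)
    (fun μ hμ => besselInt_nonneg l hμ) fun μ _ => ?_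
  rw [abs_mul]
  exact mul_le_one₀ (abs_Htilde_le_one hc hD ht μ) (abs_nonneg _) (abs_Htilde_le_one hc hD ht' μ)

theorem angular_spectrum_sum_le
    (c D : ℝ) (hc : 0 < c) (hD : 0 < D)
    (G : MeasureTheory.Measure ℝ) [MeasureTheory.IsFiniteMeasure G]
    (hsum : Summable fun l : ℕ => (2 * (l : ℝ) + 1) * Cl c D G l 0 0) :
    ∀ t t' : ℝ, 0 ≤ t → 0 ≤ t' →
      (Summable fun l : ℕ => (2 * (l : ℝ) + 1) * |Cl c D G l t t'|) ∧
      ∑' l : ℕ, (2 * (l : ℝ) + 1) * |Cl c D G l t t'|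
        ≤ ∑' l : ℕ, (2 * (l : ℝ) + 1) * Cl c D G l 0 0 := by
  intro t t' ht ht'
  have hle : ∀ l : ℕ,
      (2 * (l : ℝ) + 1) * |Cl c D G l t t'| ≤ (2 * (l : ℝ) + 1) * Cl c D G l 0 0 :=
    fun l => mul_le_mul_of_nonneg_left (abs_Cl_le_Cl_zero_zero hc hD G ht ht' l) (by positivity)
  have habs : Summable fun l : ℕ => (2 * (l : ℝ) + 1) * |Cl c D G l t t'| :=
    hsum.of_nonneg_of_le (fun l => by positivity) hle
  exact ⟨habs, habs.tsum_le_tsum hle hsum⟩
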